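/- arXiv:0901.2132 — 3 statements merged into one kernel-verified Lean document; each statement's English description precedes it below -/
import Mathlib

section
/- Define $a_1(t) = a e^{-\nu t}$ and for $k \ge 2$, $a_k(t) = 3ik\, e^{-\nu k^2 t} \int_0^t e^{\nu k^2 \tau} \sum_{k_1+k_2=k,\ k_1,k_2 \ge 1} a_{k_1}(\tau) a_{k_2}(\tau)\, d\tau$, where $a > 0$ and $\nu > 0$ are real. Then for every $k = 4n+j$ with $n \ge 0$ and $j \in \{1,2,3,4\}$, there exists a function $b_k(t) > 0$ for $t > 0$ such that $a_k(t) = i^{j-1} a^k b_k(t)$. -/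
/-!
Write `a_k(t) = c_k b_k(t)` with `c_k = i^(k-1) a^k` and `b_k` real, continuous and positive for
`t > 0`. Such factorizations are stable under products (the constants multiply, so every term
`a_j a_(k-j)` of the quadratic nonlinearity carries the same constant `i^(k-2) a^k`), under nonempty
sums with a common constant, and under the Duhamel integral `e^(-μt) ∫₀ᵗ e^(μτ) (·) dτ`, which keeps
positive real functions positive. The prefactor `3ik` then contributes one more power of `i`, and
strong induction on `k` gives the factorization for every `k`; finally `i^(4n+j-1) = i^(j-1)`.
-/

open MeasureTheory Complex

def IsPosRealMultiple (c : ℂ) (f : ℝ → ℂ) : Prop :=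
  ∃ b : ℝ → ℝ, Continuous b ∧ (∀ t, 0 < t → 0 < b t) ∧ ∀ t, f t = c * b t

namespace IsPosRealMultiple

variable {c d : ℂ} {f g : ℝ → ℂ}

theorem congr (hf : IsPosRealMultiple c f) (hcd : c = d) (hfg : ∀ t, f t = g t) :
    IsPosRealMultiple d g := by
  obtain ⟨b, hb, hpos, hfb⟩ := hf
  exact ⟨b, hb, hpos, fun t => by rw [← hfg, hfb, hcd]⟩

theorem mul (hf : IsPosRealMultiple c f) (hg : IsPosRealMultiple d g) :
    IsPosRealMultiple (c * d) (f * g) := by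
  obtain ⟨b, hb, hbpos, hfb⟩ := hf
  obtain ⟨b', hb', hb'pos, hgb'⟩ := hg
  refine ⟨b * b', hb.mul hb', fun t ht => mul_pos (hbpos t ht) (hb'pos t ht), fun t => ?_⟩
  simp only [Pi.mul_apply, hfb, hgb', ofReal_mul]
  ring

theorem add (hf : IsPosRealMultiple c f) (hg : IsPosRealMultiple c g) :
    IsPosRealMultiple c (f + g) := by
  obtain ⟨b, hb, hbpos, hfb⟩ := hf
  obtain ⟨b', hb', hb'pos, hgb'⟩ := hg
  refine ⟨b + b', hb.add hb', fun t ht => add_pos (hbpos t ht) (hb'pos t ht), fun t => ?_⟩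
  simp only [Pi.add_apply, hfb, hgb', ofReal_add]
  ring

theorem sum {ι : Type*} {s : Finset ι} {F : ι → ℝ → ℂ} (hs : s.Nonempty)
    (hF : ∀ i ∈ s, IsPosRealMultiple c (F i)) :
    IsPosRealMultiple c (fun t => ∑ i ∈ s, F i t) := by
  simp_rw [← Finset.sum_apply]
  induction hs using Finset.Nonempty.cons_induction with
  | singleton i => simpa using hF i (Finset.mem_singleton_self i)
  | cons i s hi _ ih =>
    rw [Finset.sum_cons]
    simp only [Finset.mem_cons, forall_eq_or_imp] at hF
    exact hF.1.add (ih hF.2)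

theorem const_mul (hf : IsPosRealMultiple c f) (d : ℂ) :
    IsPosRealMultiple (d * c) (fun t => d * f t) := by
  obtain ⟨b, hb, hbpos, hfb⟩ := hf
  exact ⟨b, hb, hbpos, fun t => by simp only [hfb, mul_assoc]⟩

theorem ofReal_mul {r : ℝ} (hr : 0 < r) (hf : IsPosRealMultiple c f) :
    IsPosRealMultiple c (fun t => r * f t) := by
  obtain ⟨b, hb, hbpos, hfb⟩ := hf
  refine ⟨fun t => r * b t, continuous_const.mul hb, fun t ht => mul_pos hr (hbpos t ht),
    fun t => ?_⟩
  simp only [hfb, Complex.ofReal_mul]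
  ring

theorem duhamel (hf : IsPosRealMultiple c f) (μ : ℝ) :
    IsPosRealMultiple c (fun t => Real.exp (-μ * t) *
      ∫ τ in (0 : ℝ)..t, (Real.exp (μ * τ) : ℂ) * f τ) := by
  obtain ⟨b, hb, hbpos, hfb⟩ := hf
  have hint : Continuous fun τ => Real.exp (μ * τ) * b τ := by fun_prop
  refine ⟨fun t => Real.exp (-μ * t) * ∫ τ in (0 : ℝ)..t, Real.exp (μ * τ) * b τ,
    (by fun_prop : Continuous fun t => Real.exp (-μ * t)).mul
      (intervalIntegral.continuous_primitive (fun _ _ => hint.intervalIntegrable _ _) 0),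
    fun t ht => mul_pos (Real.exp_pos _) ?_, fun t => ?_⟩
  · exact intervalIntegral.intervalIntegral_pos_of_pos_on (hint.intervalIntegrable 0 t)
      (fun τ hτ => mul_pos (Real.exp_pos _) (hbpos τ hτ.1)) ht
  · have hintegrand :
        ∀ τ, (Real.exp (μ * τ) : ℂ) * f τ = c * ((Real.exp (μ * τ) * b τ : ℝ) : ℂ) := by
      intro τ
      rw [hfb]
      push_cast
      ring
    simp_rw [hintegrand, intervalIntegral.integral_const_mul, intervalIntegral.integral_ofReal]
    push_cast
    ring

end IsPosRealMultiple

theorem isPosRealMultiple_of_burgers_recursion (ν a0 : ℝ) (a : ℕ → ℝ → ℂ)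
    (h1 : ∀ t : ℝ, a 1 t = (a0 : ℂ) * Real.exp (-ν * t))
    (hk : ∀ k : ℕ, 2 ≤ k → ∀ t : ℝ,
      a k t = 3 * Complex.I * k * Real.exp (-ν * k ^ 2 * t) *
        ∫ τ in (0 : ℝ)..t, (Real.exp (ν * k ^ 2 * τ) : ℂ) *
          ∑ j ∈ Finset.Ico 1 k, a j τ * a (k - j) τ)
    (k : ℕ) (hk1 : 1 ≤ k) : IsPosRealMultiple (I ^ (k - 1) * (a0 : ℂ) ^ k) (a k) := by
  induction k using Nat.strong_induction_on with
  | _ k IH =>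
  obtain rfl | hk2 := eq_or_lt_of_le hk1
  · exact ⟨fun t => Real.exp (-ν * t), by fun_prop, fun t _ => Real.exp_pos _,
      fun t => by simp [h1]⟩
  have hterm : ∀ j ∈ Finset.Ico 1 k, IsPosRealMultiple (I ^ (k - 2) * (a0 : ℂ) ^ k)
      (fun τ => a j τ * a (k - j) τ) := by
    intro j hj
    rw [Finset.mem_Ico] at hj
    refine ((IH j hj.2 hj.1).mul (IH (k - j) (by omega) (by omega))).congr ?_ (fun _ => rfl)
    rw [mul_mul_mul_comm, ← pow_add, ← pow_add]
    congr 2 <;> omega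
  have hsum := (IsPosRealMultiple.sum ⟨1, by simp; omega⟩ hterm).duhamel (ν * k ^ 2)
    |>.ofReal_mul (by positivity : (0 : ℝ) < 3 * k) |>.const_mul I
  refine hsum.congr ?_ (fun t => ?_)
  · rw [← mul_assoc, ← pow_succ']
    congr 2
    omega
  · rw [hk k hk2 t]
    simp only [neg_mul, Complex.ofReal_mul, Complex.ofReal_ofNat,
      Complex.ofReal_natCast]
    ring

theorem stmt_2_general (ν a0 : ℝ) (a : ℕ → ℝ → ℂ)
    (h1 : ∀ t : ℝ, a 1 t = (a0 : ℂ) * Real.exp (-ν * t))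
    (hk : ∀ k : ℕ, 2 ≤ k → ∀ t : ℝ,
      a k t = 3 * Complex.I * k * Real.exp (-ν * k ^ 2 * t) *
        ∫ τ in (0 : ℝ)..t, (Real.exp (ν * k ^ 2 * τ) : ℂ) *
          ∑ j ∈ Finset.Ico 1 k, a j τ * a (k - j) τ) :
    ∀ n j : ℕ, 1 ≤ j → j ≤ 4 →
      ∃ b : ℝ → ℝ, (∀ t : ℝ, 0 < t → 0 < b t) ∧
        ∀ t : ℝ, a (4 * n + j) t = Complex.I ^ (j - 1) * (a0 : ℂ) ^ (4 * n + j) * (b t : ℂ) := by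
  intro n j hj1 _
  obtain ⟨b, -, hbpos, hab⟩ :=
    isPosRealMultiple_of_burgers_recursion ν a0 a h1 hk (4 * n + j) (by omega)
  have hphase : I ^ (4 * n + j - 1) = I ^ (j - 1) := by
    rw [show 4 * n + j - 1 = 4 * n + (j - 1) by omega, pow_add, pow_mul, I_pow_four, one_pow,
      one_mul]
  exact ⟨b, hbpos, fun t => by rw [hab, hphase]⟩

theorem stmt_2 (ν a0 : ℝ) (hν : 0 < ν) (ha0 : 0 < a0) (a : ℕ → ℝ → ℂ)
    (h1 : ∀ t : ℝ, a 1 t = (a0 : ℂ) * Real.exp (-ν * t))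
    (hk : ∀ k : ℕ, 2 ≤ k → ∀ t : ℝ,
      a k t = 3 * Complex.I * k * Real.exp (-ν * k ^ 2 * t) *
        ∫ τ in (0 : ℝ)..t, (Real.exp (ν * k ^ 2 * τ) : ℂ) *
          ∑ j ∈ Finset.Ico 1 k, a j τ * a (k - j) τ) :
    ∀ n j : ℕ, 1 ≤ j → j ≤ 4 →
      ∃ b : ℝ → ℝ, (∀ t : ℝ, 0 < t → 0 < b t) ∧
        ∀ t : ℝ, a (4 * n + j) t = Complex.I ^ (j - 1) * (a0 : ℂ) ^ (4 * n + j) * (b t : ℂ) :=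
  stmt_2_general ν a0 a h1 hk
end

section
/- Let $\nu > 0$, $a > 0$, and define $a_1(t) = a e^{-\nu t}$ and for $k \ge 2$, $a_k(t) = 3ik\, e^{-\nu k^2 t} \int_0^t e^{\nu k^2 \tau} \sum_{k_1+k_2=k,\ k_1,k_2\ge 1} a_{k_1}(\tau) a_{k_2}(\tau)\, d\tau$. Then for every $k \ge 2$ and $t \ge 0$, $|a_k(t)| = 3k\, e^{-\nu k^2 t} \int_0^t e^{\nu k^2 \tau} \sum_{k_1+k_2=k} |a_{k_1}(\tau)|\,|a_{k_2}(\tau)|\, d\tau$. -/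
/-!
By strong induction on `k`, `a k t = i ^ (k - 1) * ‖a k t‖` for `t ≥ 0`: every product
`a j τ * a (k - j) τ` in the convolution is then a nonnegative multiple of `i ^ (k - 2)`, so
the integral is `i ^ (k - 2)` times a nonnegative real number, and the prefactor `3 i k`
turns the phase into `i ^ (k - 1)`. Since no cancellation occurs, taking norms just replaces
every `a j` by `‖a j‖`.
-/

open MeasureTheory Complex

lemma sum_Ico_mul_sub_eq_I_pow_mul {f : ℕ → ℂ} {k : ℕ}
    (hf : ∀ j ∈ Finset.Ico 1 k, f j = I ^ (j - 1) * ‖f j‖) :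
    ∑ j ∈ Finset.Ico 1 k, f j * f (k - j) =
      I ^ (k - 2) * ((∑ j ∈ Finset.Ico 1 k, ‖f j‖ * ‖f (k - j)‖ : ℝ) : ℂ) := by
  push_cast
  rw [Finset.mul_sum]
  refine Finset.sum_congr rfl fun j hj => ?_
  have hj' := Finset.mem_Ico.mp hj
  rw [hf j hj, hf (k - j) (Finset.mem_Ico.mpr ⟨by omega, by omega⟩)]
  simp only [norm_mul, norm_pow, norm_I, one_pow, one_mul, norm_real, Real.norm_eq_abs,
    abs_norm]
  rw [show k - 2 = (j - 1) + (k - j - 1) by omega, pow_add]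
  ring

lemma intervalIntegral_eq_mul_ofReal {g : ℝ → ℂ} {h : ℝ → ℝ} {w : ℂ} {s t : ℝ}
    (hg : Set.EqOn g (fun τ => w * h τ) (Set.uIcc s t)) :
    ∫ τ in s..t, g τ = w * ((∫ τ in s..t, h τ : ℝ) : ℂ) := by
  rw [intervalIntegral.integral_congr hg, intervalIntegral.integral_const_mul,
    intervalIntegral.integral_ofReal]

lemma norm_I_pow_mul_ofReal {r : ℝ} (hr : 0 ≤ r) (m : ℕ) : ‖I ^ m * (r : ℂ)‖ = r := by
  rw [norm_mul, norm_pow, norm_I, one_pow, one_mul, norm_real, Real.norm_of_nonneg hr]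

noncomputable def normDuhamel (ν : ℝ) (a : ℕ → ℝ → ℂ) (k : ℕ) (t : ℝ) : ℝ :=
  3 * k * Real.exp (-ν * k ^ 2 * t) *
    ∫ τ in (0 : ℝ)..t, Real.exp (ν * k ^ 2 * τ) * ∑ j ∈ Finset.Ico 1 k, ‖a j τ‖ * ‖a (k - j) τ‖

lemma normDuhamel_nonneg (ν : ℝ) (a : ℕ → ℝ → ℂ) (k : ℕ) {t : ℝ} (ht : 0 ≤ t) :
    0 ≤ normDuhamel ν a k t := by
  have hint : 0 ≤ ∫ τ in (0 : ℝ)..t,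
      Real.exp (ν * k ^ 2 * τ) * ∑ j ∈ Finset.Ico 1 k, ‖a j τ‖ * ‖a (k - j) τ‖ :=
    intervalIntegral.integral_nonneg ht fun τ _ => by positivity
  unfold normDuhamel
  positivity

section Burgers

variable {ν : ℝ} {a : ℕ → ℝ → ℂ}
  (hk : ∀ k : ℕ, 2 ≤ k → ∀ t : ℝ,
      a k t = 3 * I * k * Real.exp (-ν * k ^ 2 * t) *
        ∫ τ in (0 : ℝ)..t, (Real.exp (ν * k ^ 2 * τ) : ℂ) *
          ∑ j ∈ Finset.Ico 1 k, a j τ * a (k - j) τ)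
include hk

lemma eq_I_pow_mul_normDuhamel {k : ℕ} (hk2 : 2 ≤ k) {t : ℝ} (ht : 0 ≤ t)
    (hphase : ∀ j ∈ Finset.Ico 1 k, ∀ τ ∈ Set.Icc 0 t, a j τ = I ^ (j - 1) * ‖a j τ‖) :
    a k t = I ^ (k - 1) * (normDuhamel ν a k t : ℂ) := by
  have hintegrand : Set.EqOn
      (fun τ => (Real.exp (ν * k ^ 2 * τ) : ℂ) * ∑ j ∈ Finset.Ico 1 k, a j τ * a (k - j) τ)
      (fun τ => I ^ (k - 2) * ((Real.exp (ν * k ^ 2 * τ) *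
        ∑ j ∈ Finset.Ico 1 k, ‖a j τ‖ * ‖a (k - j) τ‖ : ℝ) : ℂ))
      (Set.uIcc 0 t) := by
    intro τ hτ
    rw [Set.uIcc_of_le ht] at hτ
    simp only
    rw [sum_Ico_mul_sub_eq_I_pow_mul fun j hj => hphase j hj τ hτ]
    push_cast
    ring
  rw [hk k hk2 t, intervalIntegral_eq_mul_ofReal hintegrand,
    show I ^ (k - 1) = I ^ (k - 2) * I by rw [← pow_succ]; congr 1; omega, normDuhamel]
  push_cast
  ring

lemma eq_I_pow_mul_norm {a0 : ℝ} (h1 : ∀ t : ℝ, a 1 t = (a0 : ℂ) * Real.exp (-ν * t)) (ha0 : 0 ≤ a0) :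
    ∀ k : ℕ, 1 ≤ k → ∀ t : ℝ, 0 ≤ t → a k t = I ^ (k - 1) * ‖a k t‖ := by
  intro k
  induction k using Nat.strong_induction_on with
  | _ k ih =>
    intro hk1 t ht
    obtain rfl | hk2 := eq_or_lt_of_le hk1
    · rw [h1 t, ← ofReal_mul, norm_real, Real.norm_of_nonneg (by positivity)]
      simp
    · have heq := eq_I_pow_mul_normDuhamel hk hk2 ht fun j hj τ hτ =>
        ih j (Finset.mem_Ico.mp hj).2 (Finset.mem_Ico.mp hj).1 τ hτ.1
      rw [heq, norm_I_pow_mul_ofReal (normDuhamel_nonneg ν a k ht)]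

end Burgers

theorem stmt_3_general (ν a0 : ℝ) (ha0 : 0 < a0) (a : ℕ → ℝ → ℂ)
    (h1 : ∀ t : ℝ, a 1 t = (a0 : ℂ) * Real.exp (-ν * t))
    (hk : ∀ k : ℕ, 2 ≤ k → ∀ t : ℝ,
      a k t = 3 * Complex.I * k * Real.exp (-ν * k ^ 2 * t) *
        ∫ τ in (0 : ℝ)..t, (Real.exp (ν * k ^ 2 * τ) : ℂ) *
          ∑ j ∈ Finset.Ico 1 k, a j τ * a (k - j) τ) :
    ∀ k : ℕ, 2 ≤ k → ∀ t : ℝ, 0 ≤ t →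
      ‖a k t‖ = 3 * k * Real.exp (-ν * k ^ 2 * t) *
        ∫ τ in (0 : ℝ)..t, Real.exp (ν * k ^ 2 * τ) *
          ∑ j ∈ Finset.Ico 1 k, ‖a j τ‖ * ‖a (k - j) τ‖ := by
  intro k hk2 t ht
  have hphase := eq_I_pow_mul_norm hk h1 ha0.le
  rw [eq_I_pow_mul_normDuhamel hk hk2 ht fun j hj τ hτ =>
      hphase j (Finset.mem_Ico.mp hj).1 τ hτ.1,
    norm_I_pow_mul_ofReal (normDuhamel_nonneg ν a k ht), normDuhamel]

theorem stmt_3 (ν a0 : ℝ) (hν : 0 < ν) (ha0 : 0 < a0) (a : ℕ → ℝ → ℂ)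
    (h1 : ∀ t : ℝ, a 1 t = (a0 : ℂ) * Real.exp (-ν * t))
    (hk : ∀ k : ℕ, 2 ≤ k → ∀ t : ℝ,
      a k t = 3 * Complex.I * k * Real.exp (-ν * k ^ 2 * t) *
        ∫ τ in (0 : ℝ)..t, (Real.exp (ν * k ^ 2 * τ) : ℂ) *
          ∑ j ∈ Finset.Ico 1 k, a j τ * a (k - j) τ) :
    ∀ k : ℕ, 2 ≤ k → ∀ t : ℝ, 0 ≤ t →
      ‖a k t‖ = 3 * k * Real.exp (-ν * k ^ 2 * t) *
        ∫ τ in (0 : ℝ)..t, Real.exp (ν * k ^ 2 * τ) *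
          ∑ j ∈ Finset.Ico 1 k, ‖a j τ‖ * ‖a (k - j) τ‖ :=
  stmt_3_general ν a0 ha0 a h1 hk
end

section
/- Let $\nu = 1$, $T \ge T_0 := \sum_{k=2}^\infty \frac{1}{k^2} \ln\frac{3k-3}{2k-3}$, and $a > 0$ with $A := a e^{-T} \ge 1$. Define $a_1(t) = a e^{-t}$ and $a_k(t) = 3ik\, e^{-k^2 t} \int_0^t e^{k^2 \tau} \sum_{k_1+k_2=k} a_{k_1}(\tau) a_{k_2}(\tau) d\tau$ for $k \ge 2$. Then $|a_k(T)| \ge A^k$ for all $k \ge 1$. -/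
/-!
Write `a_k(t) = i^(k-1) r_k(t)`. Inductively all `r_k` are nonnegative: the phases of the
products `a_j a_(k-j)` all equal `i^(k-2)`, so the quadratic interaction never cancels and the
moduli obey the real Duhamel equation `r_k = 3k e^(-k²t) ∫₀ᵗ e^(k²τ) Σ r_j r_(k-j)`.
If `r_j ≥ A^j` on `[t_j, T]` for all `j < k`, the integrand is nonnegative and at least
`(k-1) A^k e^(k²τ)` on `[t_(k-1), t]`, so `r_k(t) ≥ 3(k-1)/k · (1 - e^(-k²(t - t_(k-1)))) A^k`;
the gap `t_k - t_(k-1)` is exactly what makes this factor reach `1` for `t ≥ t_k`.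
Since `T_0 = sup_k t_k`, the bounds hold at `t = T`.
-/

open MeasureTheory Complex

noncomputable def timeGap (k : ℕ) : ℝ :=
  1 / (k : ℝ) ^ 2 * Real.log ((3 * k - 3) / (2 * k - 3))

/-- The time `t_k` after which the lower bound `A ^ k` holds. -/
noncomputable def activationTime (k : ℕ) : ℝ :=
  ∑ j ∈ Finset.range (k - 1), timeGap (j + 2)

lemma timeGap_nonneg {k : ℕ} (hk : 2 ≤ k) : 0 ≤ timeGap k := by
  have hk' : (2 : ℝ) ≤ k := by exact_mod_cast hk
  refine mul_nonneg (by positivity) (Real.log_nonneg ?_)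
  rw [le_div_iff₀ (by linarith)]
  linarith

lemma timeGap_le {k : ℕ} (hk : 2 ≤ k) : timeGap k ≤ Real.log 3 * (1 / (k : ℝ) ^ 2) := by
  have hk' : (2 : ℝ) ≤ k := by exact_mod_cast hk
  rw [timeGap, mul_comm (Real.log 3)]
  gcongr
  · exact div_pos (by linarith) (by linarith)
  · rw [div_le_iff₀ (by linarith)]
    linarith

lemma summable_timeGap_add_two : Summable fun j : ℕ => timeGap (j + 2) := by
  have hsum : Summable fun j : ℕ => Real.log 3 * (1 / ((j + 2 : ℕ) : ℝ) ^ 2) :=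
    ((summable_nat_add_iff 2).2 (Real.summable_one_div_nat_pow.2 one_lt_two)).mul_left _
  exact hsum.of_nonneg_of_le (fun j => timeGap_nonneg (by omega)) fun j => timeGap_le (by omega)

lemma activationTime_one : activationTime 1 = 0 := by
  simp [activationTime]

lemma activationTime_eq_add_timeGap {k : ℕ} (hk : 2 ≤ k) :
    activationTime k = activationTime (k - 1) + timeGap k := by
  obtain ⟨m, rfl⟩ := Nat.exists_eq_add_of_le' hk
  simp only [activationTime, show m + 2 - 1 = m + 1 by omega, Nat.add_sub_cancel,
    Finset.sum_range_succ]

lemma activationTime_nonneg (k : ℕ) : 0 ≤ activationTime k :=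
  Finset.sum_nonneg fun _ _ => timeGap_nonneg (by omega)

lemma monotone_activationTime : Monotone activationTime := fun _ _ h =>
  Finset.sum_le_sum_of_subset_of_nonneg (Finset.range_subset_range.2 (by omega))
    fun _ _ _ => timeGap_nonneg (by omega)

lemma activationTime_le_tsum (k : ℕ) : activationTime k ≤ ∑' j : ℕ, timeGap (j + 2) :=
  summable_timeGap_add_two.sum_le_tsum _ fun _ _ => timeGap_nonneg (by omega)

lemma le_three_mul_one_sub_exp {k : ℕ} (hk : 2 ≤ k) {d : ℝ} (hd : timeGap k ≤ d) :
    (k : ℝ) ≤ 3 * (k - 1) * (1 - Real.exp (-((k : ℝ) ^ 2 * d))) := by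
  have hk' : (2 : ℝ) ≤ k := by exact_mod_cast hk
  have hlog : Real.log ((3 * k - 3) / (2 * k - 3)) ≤ (k : ℝ) ^ 2 * d := by
    rw [timeGap, one_div, inv_mul_le_iff₀ (by positivity)] at hd
    exact hd
  have hexp : Real.exp (-((k : ℝ) ^ 2 * d)) ≤ (2 * k - 3) / (3 * k - 3) := by
    rw [← inv_div, ← Real.exp_log (div_pos (by linarith : (0 : ℝ) < 3 * k - 3) (by linarith)),
      ← Real.exp_neg]
    exact Real.exp_le_exp.2 (neg_le_neg hlog)
  rw [le_div_iff₀ (by linarith)] at hexp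
  nlinarith

lemma integral_exp_mul (κ s t : ℝ) (hκ : κ ≠ 0) :
    ∫ τ in s..t, Real.exp (κ * τ) = (Real.exp (κ * t) - Real.exp (κ * s)) / κ := by
  rw [intervalIntegral.integral_comp_mul_left Real.exp hκ, integral_exp, smul_eq_mul]
  ring

/-- Only the part of the integral over `[s, t]`, where `f ≥ c`, is kept. -/
lemma mul_one_sub_exp_le_integral {κ c s t : ℝ} {f : ℝ → ℝ} (hκ : 0 < κ) (hs : 0 ≤ s)
    (hst : s ≤ t) (hf : Continuous f) (hf0 : ∀ τ ∈ Set.Icc 0 s, 0 ≤ f τ)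
    (hfc : ∀ τ ∈ Set.Icc s t, c ≤ f τ) :
    c * (1 - Real.exp (-(κ * (t - s)))) ≤
      κ * Real.exp (-κ * t) * ∫ τ in 0..t, Real.exp (κ * τ) * f τ := by
  have hg : Continuous fun τ => Real.exp (κ * τ) * f τ := by fun_prop
  have hhead : 0 ≤ ∫ τ in 0..s, Real.exp (κ * τ) * f τ :=
    intervalIntegral.integral_nonneg hs fun τ hτ => mul_nonneg (Real.exp_pos _).le (hf0 τ hτ)
  have htail : c * ((Real.exp (κ * t) - Real.exp (κ * s)) / κ) ≤
      ∫ τ in s..t, Real.exp (κ * τ) * f τ := by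
    rw [← integral_exp_mul κ s t hκ.ne', ← intervalIntegral.integral_const_mul]
    refine intervalIntegral.integral_mono_on hst
      ((by fun_prop : Continuous fun τ => c * Real.exp (κ * τ)).intervalIntegrable _ _)
      (hg.intervalIntegrable _ _)
      fun τ hτ => ?_
    rw [mul_comm]
    exact mul_le_mul_of_nonneg_left (hfc τ hτ) (Real.exp_pos _).le
  have hsplit := intervalIntegral.integral_add_adjacent_intervals
    (hg.intervalIntegrable (μ := volume) 0 s) (hg.intervalIntegrable s t)
  have hrescale : κ * Real.exp (-κ * t) * (c * ((Real.exp (κ * t) - Real.exp (κ * s)) / κ)) =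
      c * (1 - Real.exp (-(κ * (t - s)))) := by
    have hinv : Real.exp (-(κ * t)) * Real.exp (κ * t) = 1 := by
      rw [← Real.exp_add, neg_add_cancel, Real.exp_zero]
    rw [show -(κ * (t - s)) = -(κ * t) + κ * s by ring, Real.exp_add, neg_mul]
    field_simp
    linear_combination c * hinv
  rw [← hsplit, ← hrescale]
  gcongr
  linarith

/-- The right-hand side of the mild (Duhamel) formulation, applied to the moduli `r j`. -/
noncomputable def duhamel (r : ℕ → ℝ → ℝ) (k : ℕ) (t : ℝ) : ℝ :=
  3 * k * Real.exp (-(k : ℝ) ^ 2 * t) *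
    ∫ τ in (0 : ℝ)..t, Real.exp ((k : ℝ) ^ 2 * τ) * ∑ j ∈ Finset.Ico 1 k, r j τ * r (k - j) τ

lemma duhamel_nonneg {r : ℕ → ℝ → ℝ} (hr : ∀ j τ, 0 ≤ r j τ) (k : ℕ) {t : ℝ} (ht : 0 ≤ t) :
    0 ≤ duhamel r k t :=
  mul_nonneg (by positivity) <| intervalIntegral.integral_nonneg ht fun _ _ =>
    mul_nonneg (Real.exp_pos _).le <| Finset.sum_nonneg fun _ _ => mul_nonneg (hr _ _) (hr _ _)

lemma sub_one_mul_pow_le_sum_Ico {A : ℝ} (hA : 0 ≤ A) {k : ℕ} (hk : 1 ≤ k) {x : ℕ → ℝ}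
    (hx : ∀ j ∈ Finset.Ico 1 k, A ^ j ≤ x j) :
    ((k : ℝ) - 1) * A ^ k ≤ ∑ j ∈ Finset.Ico 1 k, x j * x (k - j) := by
  have hterm : ∀ j ∈ Finset.Ico 1 k, A ^ k ≤ x j * x (k - j) := by
    intro j hj
    have hj' := Finset.mem_Ico.1 hj
    rw [← pow_mul_pow_sub A hj'.2.le]
    exact mul_le_mul (hx j hj) (hx (k - j) (Finset.mem_Ico.2 ⟨by omega, by omega⟩))
      (by positivity) ((pow_nonneg hA j).trans (hx j hj))
  calc ((k : ℝ) - 1) * A ^ k = ∑ _j ∈ Finset.Ico 1 k, A ^ k := by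
        rw [Finset.sum_const, Nat.card_Ico, nsmul_eq_mul, Nat.cast_sub hk, Nat.cast_one]
    _ ≤ _ := Finset.sum_le_sum hterm

theorem pow_le_of_eq_duhamel {r : ℕ → ℝ → ℝ} {A T : ℝ} (hA : 0 ≤ A) (hr0 : ∀ j τ, 0 ≤ r j τ)
    (hcont : ∀ k, 1 ≤ k → Continuous (r k)) (h1 : ∀ t ∈ Set.Icc 0 T, A ≤ r 1 t)
    (hr : ∀ k, 2 ≤ k → ∀ t, 0 ≤ t → r k t = duhamel r k t) :
    ∀ k, 1 ≤ k → ∀ t, activationTime k ≤ t → t ≤ T → A ^ k ≤ r k t := by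
  intro k
  induction k using Nat.strong_induction_on with
  | _ k ih =>
  intro hk1 t htk htT
  rcases hk1.eq_or_lt with rfl | hk2
  · rw [activationTime_one] at htk
    simpa using h1 t ⟨htk, htT⟩
  replace hk2 : 2 ≤ k := hk2
  set s := activationTime (k - 1)
  have hs : 0 ≤ s := activationTime_nonneg _
  have hgap : timeGap k ≤ t - s := by
    linarith [activationTime_eq_add_timeGap hk2]
  have hst : s ≤ t := by linarith [timeGap_nonneg hk2]
  have hprod : ∀ τ ∈ Set.Icc s t, ((k : ℝ) - 1) * A ^ k ≤
      ∑ j ∈ Finset.Ico 1 k, r j τ * r (k - j) τ := fun τ hτ =>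
    sub_one_mul_pow_le_sum_Ico hA hk1 fun j hj => by
      obtain ⟨hj1, hjk⟩ := Finset.mem_Ico.1 hj
      exact ih j hjk hj1 τ ((monotone_activationTime (by omega)).trans hτ.1) (hτ.2.trans htT)
  have hint := mul_one_sub_exp_le_integral (κ := (k : ℝ) ^ 2) (by positivity) hs hst
    (continuous_finsetSum _ fun j hj => by
      rw [Finset.mem_Ico] at hj
      exact (hcont j hj.1).mul (hcont (k - j) (by omega)))
    (fun τ _ => Finset.sum_nonneg fun _ _ => mul_nonneg (hr0 _ _) (hr0 _ _)) hprod
  have hexp := le_three_mul_one_sub_exp hk2 hgap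
  rw [hr k hk2 t (hs.trans hst), duhamel]
  refine le_of_mul_le_mul_left ?_ (Nat.cast_pos.2 (by omega) : (0 : ℝ) < k)
  calc (k : ℝ) * A ^ k ≤ 3 * (k - 1) * (1 - Real.exp (-((k : ℝ) ^ 2 * (t - s)))) * A ^ k :=
        mul_le_mul_of_nonneg_right hexp (by positivity)
    _ ≤ 3 * ((k : ℝ) ^ 2 * Real.exp (-(k : ℝ) ^ 2 * t) * ∫ τ in (0 : ℝ)..t,
          Real.exp ((k : ℝ) ^ 2 * τ) * ∑ j ∈ Finset.Ico 1 k, r j τ * r (k - j) τ) := by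
        linarith
    _ = _ := by ring

lemma sum_Ico_mul_eq_I_pow_mul {z : ℕ → ℂ} {k : ℕ}
    (hz : ∀ j ∈ Finset.Ico 1 k, z j = I ^ (j - 1) * ‖z j‖) :
    ∑ j ∈ Finset.Ico 1 k, z j * z (k - j) =
      I ^ (k - 2) * ((∑ j ∈ Finset.Ico 1 k, ‖z j‖ * ‖z (k - j)‖ : ℝ) : ℂ) := by
  push_cast
  rw [Finset.mul_sum]
  refine Finset.sum_congr rfl fun j hj => ?_
  have hj' := Finset.mem_Ico.1 hj
  rw [hz j hj, hz (k - j) (Finset.mem_Ico.2 ⟨by omega, by omega⟩),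
    show k - 2 = (j - 1) + (k - j - 1) by omega, pow_add]
  simp only [norm_mul, norm_pow, norm_I, one_pow, one_mul, Complex.norm_real, Real.norm_eq_abs,
    abs_norm]
  ring

section Coefficients

variable {a0 : ℝ} {a : ℕ → ℝ → ℂ}
  (h1 : ∀ t : ℝ, a 1 t = (a0 : ℂ) * Real.exp (-t))
  (hk : ∀ k : ℕ, 2 ≤ k → ∀ t : ℝ,
    a k t = 3 * Complex.I * k * Real.exp (-(k : ℝ) ^ 2 * t) *
      ∫ τ in (0 : ℝ)..t, (Real.exp ((k : ℝ) ^ 2 * τ) : ℂ) *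
        ∑ j ∈ Finset.Ico 1 k, a j τ * a (k - j) τ)

include h1 in
lemma norm_coeff_one (ha0 : 0 ≤ a0) (t : ℝ) : ‖a 1 t‖ = a0 * Real.exp (-t) := by
  rw [h1, norm_mul, Complex.norm_real, Complex.norm_real, Real.norm_of_nonneg ha0,
    Real.norm_of_nonneg (Real.exp_pos _).le]

include hk

include h1 in
lemma continuous_coeff : ∀ k, 1 ≤ k → Continuous (a k) := by
  intro k
  induction k using Nat.strong_induction_on with
  | _ k ih =>
  intro hk1
  rcases hk1.eq_or_lt with rfl | hk2
  · rw [funext h1]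
    fun_prop
  have hg : Continuous fun τ : ℝ => (Real.exp ((k : ℝ) ^ 2 * τ) : ℂ) *
      ∑ j ∈ Finset.Ico 1 k, a j τ * a (k - j) τ := by
    refine .mul (by fun_prop) (continuous_finsetSum _ fun j hj => ?_)
    rw [Finset.mem_Ico] at hj
    exact (ih j hj.2 hj.1).mul (ih (k - j) (by omega) (by omega))
  rw [funext (hk k hk2)]
  exact .mul (by fun_prop) (intervalIntegral.continuous_primitive (hg.intervalIntegrable) 0)

lemma coeff_eq_I_pow_mul_duhamel {k : ℕ} (hk2 : 2 ≤ k) {t : ℝ} (ht : 0 ≤ t)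
    (hphase : ∀ j ∈ Finset.Ico 1 k, ∀ τ ∈ Set.Icc 0 t, a j τ = I ^ (j - 1) * ‖a j τ‖) :
    a k t = I ^ (k - 1) * (duhamel (fun j τ => ‖a j τ‖) k t : ℂ) := by
  have hint : (∫ τ in (0 : ℝ)..t, (Real.exp ((k : ℝ) ^ 2 * τ) : ℂ) *
      ∑ j ∈ Finset.Ico 1 k, a j τ * a (k - j) τ) =
      I ^ (k - 2) * ((∫ τ in (0 : ℝ)..t, Real.exp ((k : ℝ) ^ 2 * τ) *
        ∑ j ∈ Finset.Ico 1 k, ‖a j τ‖ * ‖a (k - j) τ‖ : ℝ) : ℂ) := by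
    rw [← intervalIntegral.integral_ofReal, ← intervalIntegral.integral_const_mul]
    refine intervalIntegral.integral_congr fun τ hτ => ?_
    rw [Set.uIcc_of_le ht] at hτ
    rw [sum_Ico_mul_eq_I_pow_mul fun j hj => hphase j hj τ hτ]
    push_cast
    ring
  rw [hk k hk2 t, hint, duhamel, show k - 1 = (k - 2) + 1 by omega, pow_succ]
  push_cast
  ring

lemma norm_coeff_eq_duhamel_of_phase {k : ℕ} (hk2 : 2 ≤ k) {t : ℝ} (ht : 0 ≤ t)
    (hphase : ∀ j ∈ Finset.Ico 1 k, ∀ τ ∈ Set.Icc 0 t, a j τ = I ^ (j - 1) * ‖a j τ‖) :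
    ‖a k t‖ = duhamel (fun j τ => ‖a j τ‖) k t := by
  rw [coeff_eq_I_pow_mul_duhamel hk hk2 ht hphase, norm_mul, norm_pow, norm_I, one_pow, one_mul,
    Complex.norm_real, Real.norm_eq_abs, abs_of_nonneg (duhamel_nonneg (fun _ _ => norm_nonneg _)
      k ht)]

include h1 in
lemma coeff_eq_I_pow_mul_norm (ha0 : 0 < a0) :
    ∀ k, 1 ≤ k → ∀ t, 0 ≤ t → a k t = I ^ (k - 1) * ‖a k t‖ := by
  intro k
  induction k using Nat.strong_induction_on with
  | _ k ih =>
  intro hk1 t ht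
  rcases hk1.eq_or_lt with rfl | hk2
  · rw [norm_coeff_one h1 ha0.le, h1]
    simp
  have hphase : ∀ j ∈ Finset.Ico 1 k, ∀ τ ∈ Set.Icc 0 t, a j τ = I ^ (j - 1) * ‖a j τ‖ :=
    fun j hj τ hτ => ih j (Finset.mem_Ico.1 hj).2 (Finset.mem_Ico.1 hj).1 τ hτ.1
  rw [norm_coeff_eq_duhamel_of_phase hk hk2 ht hphase]
  exact coeff_eq_I_pow_mul_duhamel hk hk2 ht hphase

include h1 in
lemma norm_coeff_eq_duhamel (ha0 : 0 < a0) {k : ℕ} (hk2 : 2 ≤ k) {t : ℝ} (ht : 0 ≤ t) :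
    ‖a k t‖ = duhamel (fun j τ => ‖a j τ‖) k t :=
  norm_coeff_eq_duhamel_of_phase hk hk2 ht fun j hj τ hτ =>
    coeff_eq_I_pow_mul_norm h1 hk ha0 j (Finset.mem_Ico.1 hj).1 τ hτ.1

end Coefficients

theorem stmt_4_general (T a0 A : ℝ)
    (hT : T ≥ ∑' k : ℕ, (1 / ((k : ℝ) + 2) ^ 2) *
        Real.log ((3 * ((k : ℝ) + 2) - 3) / (2 * ((k : ℝ) + 2) - 3)))
    (ha0 : 0 < a0) (hA : A = a0 * Real.exp (-T))
    (a : ℕ → ℝ → ℂ)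
    (h1 : ∀ t : ℝ, a 1 t = (a0 : ℂ) * Real.exp (-t))
    (hk : ∀ k : ℕ, 2 ≤ k → ∀ t : ℝ,
      a k t = 3 * Complex.I * k * Real.exp (-(k : ℝ) ^ 2 * t) *
        ∫ τ in (0 : ℝ)..t, (Real.exp ((k : ℝ) ^ 2 * τ) : ℂ) *
          ∑ j ∈ Finset.Ico 1 k, a j τ * a (k - j) τ) :
    ∀ k : ℕ, 1 ≤ k → A ^ k ≤ ‖a k T‖ := by
  have hT' : ∀ k, activationTime k ≤ T := fun k => (activationTime_le_tsum k).trans <| by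
    simpa [timeGap] using hT
  have hbase : ∀ t ∈ Set.Icc 0 T, A ≤ ‖a 1 t‖ := fun t ht => by
    rw [hA, norm_coeff_one h1 ha0.le]
    gcongr
    exact ht.2
  intro k hk1
  exact pow_le_of_eq_duhamel (by rw [hA]; positivity) (fun _ _ => norm_nonneg _)
    (fun j hj => (continuous_coeff h1 hk j hj).norm) hbase
    (fun j hj t ht => norm_coeff_eq_duhamel h1 hk ha0 hj ht) k hk1 T (hT' k) le_rfl

theorem stmt_4 (T a0 A : ℝ)
    (hT : T ≥ ∑' k : ℕ, (1 / ((k : ℝ) + 2) ^ 2) *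
        Real.log ((3 * ((k : ℝ) + 2) - 3) / (2 * ((k : ℝ) + 2) - 3)))
    (ha0 : 0 < a0) (hA : A = a0 * Real.exp (-T)) (hA1 : 1 ≤ A)
    (a : ℕ → ℝ → ℂ)
    (h1 : ∀ t : ℝ, a 1 t = (a0 : ℂ) * Real.exp (-t))
    (hk : ∀ k : ℕ, 2 ≤ k → ∀ t : ℝ,
      a k t = 3 * Complex.I * k * Real.exp (-(k : ℝ) ^ 2 * t) *
        ∫ τ in (0 : ℝ)..t, (Real.exp ((k : ℝ) ^ 2 * τ) : ℂ) *
          ∑ j ∈ Finset.Ico 1 k, a j τ * a (k - j) τ) :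
    ∀ k : ℕ, 1 ≤ k → A ^ k ≤ ‖a k T‖ :=
  stmt_4_general T a0 A hT ha0 hA a h1 hk
end
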